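/- Suppose R is F-pure and that every Φ(E)-special ideal of R is fully Φ(E)-special. Then there exists a unique largest Φ(E)-special proper ideal 𝔠 of R (a proper Φ(E)-special ideal containing every proper Φ(E)-special ideal of R); this ideal 𝔠 is prime; and the local ring R/𝔠 is strongly F-regular in the sense of Lyubeznik and Smith. -/

import Mathlib

open TensorProduct IsLocalRing DirectSum

universe u v

/-! ### Frobenius twists and base change -/

/-- `R` viewed as an algebra over itself via the `n`-th power of the Frobenius
endomorphism; this plays the role of `R^{(n)}` (an `R`-module via `r • s = r ^ p ^ n * s`). -/
def FrobAlg (R : Type u) (p n : ℕ) [CommRing R] [Fact p.Prime] [CharP R p] : Type u := R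

namespace FrobAlg

variable (R : Type u) (p n : ℕ) [CommRing R] [Fact p.Prime] [CharP R p]

instance : CommRing (FrobAlg R p n) := inferInstanceAs (CommRing R)

instance : Algebra R (FrobAlg R p n) :=
  RingHom.toAlgebra (show R →+* FrobAlg R p n from (frobenius R p) ^ n)

/-- The canonical identification of `R` with the underlying set of `R^{(n)}`. -/
def of (r : R) : FrobAlg R p n := r

end FrobAlg

/-- The Frobenius base change `R^{(n)} ⊗_R M` of an `R`-module `M` along the `n`-th
power of the Frobenius endomorphism of `R`. -/
def FrobBC (R : Type u) (p n : ℕ) [CommRing R] [Fact p.Prime] [CharP R p]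
    (M : Type v) [AddCommGroup M] [Module R M] : Type (max u v) :=
  FrobAlg R p n ⊗[R] M

namespace FrobBC

variable (R : Type u) (p n : ℕ) [CommRing R] [Fact p.Prime] [CharP R p]
  (M : Type v) [AddCommGroup M] [Module R M]

noncomputable instance : AddCommGroup (FrobBC R p n M) :=
  inferInstanceAs (AddCommGroup (FrobAlg R p n ⊗[R] M))

/-- The `R`-module structure on `R^{(n)} ⊗_R M` given by multiplication on the first
factor. -/
noncomputable instance : Module R (FrobBC R p n M) :=
  inferInstanceAs (Module (FrobAlg R p n) (FrobAlg R p n ⊗[R] M))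

variable {M}

/-- The elementary tensor `r ⊗ m` in `R^{(n)} ⊗_R M`. -/
noncomputable def tmul (r : R) (m : M) : FrobBC R p n M := FrobAlg.of R p n r ⊗ₜ[R] m

end FrobBC

/-- `R` is `F`-pure if for every `R`-module `M` the natural map
`M → R^{(1)} ⊗_R M`, `m ↦ 1 ⊗ m`, is injective. -/
def IsFPure (R : Type u) (p : ℕ) [CommRing R] [Fact p.Prime] [CharP R p] : Prop :=
  ∀ (M : Type u) [AddCommGroup M] [Module R M],
    Function.Injective fun m : M => FrobBC.tmul R p 1 (1 : R) m

/-- An ideal `𝔞` of `R` is fully `Φ(E)`-special if for every `n ≥ 1`, every `r ∈ 𝔞` and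
every `e ∈ (0 :_E 𝔞)`, the element `r ⊗ e` is zero in `R^{(n)} ⊗_R E`. -/
def IsFullyPhiSpecial (R : Type u) (p : ℕ) [CommRing R] [Fact p.Prime] [CharP R p]
    (E : Type v) [AddCommGroup E] [Module R E] (𝔞 : Ideal R) : Prop :=
  ∀ n : ℕ, 1 ≤ n → ∀ r ∈ 𝔞, ∀ e : E, (∀ a ∈ 𝔞, a • e = 0) → FrobBC.tmul R p n r e = 0

/-! ### The module `Φ(E)` and the Frobenius shift -/

/-- The Frobenius `a ↦ a ^ p`, as an `R`-algebra map `R^{(n)} → R^{(n+1)}`. -/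
def frobStepAlg (R : Type u) (p n : ℕ) [CommRing R] [Fact p.Prime] [CharP R p] :
    FrobAlg R p n →ₐ[R] FrobAlg R p (n + 1) :=
  { (show FrobAlg R p n →+* FrobAlg R p (n + 1) from frobenius R p) with
    commutes' := fun r => by
      show frobenius R p (((frobenius R p) ^ n) r) = ((frobenius R p) ^ (n + 1)) r
      rw [pow_succ']
      rfl }

/-- The Frobenius `a ↦ a ^ p`, as an `R`-linear map `R^{(n)} → R^{(n+1)}`. -/
def frobStep (R : Type u) (p n : ℕ) [CommRing R] [Fact p.Prime] [CharP R p] :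
    FrobAlg R p n →ₗ[R] FrobAlg R p (n + 1) :=
  (frobStepAlg R p n).toLinearMap

/-- The graded module `Φ(E) = ⊕_{n ≥ 0} R^{(n)} ⊗_R E`. -/
def PhiModule (R : Type u) (p : ℕ) [CommRing R] [Fact p.Prime] [CharP R p]
    (E : Type v) [AddCommGroup E] [Module R E] : Type (max u v) :=
  ⨁ n : ℕ, FrobBC R p n E

namespace PhiModule

variable (R : Type u) (p : ℕ) [CommRing R] [Fact p.Prime] [CharP R p]
  (E : Type v) [AddCommGroup E] [Module R E]

noncomputable instance : AddCommGroup (PhiModule R p E) :=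
  inferInstanceAs (AddCommGroup (⨁ n : ℕ, FrobBC R p n E))

noncomputable instance : Module R (PhiModule R p E) :=
  inferInstanceAs (Module R (⨁ n : ℕ, FrobBC R p n E))

/-- The inclusion of the `n`-th component into `Φ(E)`. -/
noncomputable def of (n : ℕ) (g : FrobBC R p n E) : PhiModule R p E :=
  DirectSum.of (fun m : ℕ => FrobBC R p m E) n g

/-- The Frobenius-semilinear shift operator `x` on `Φ(E)`, sending an element
`r ⊗ e` of the `n`-th component to `r ^ p ⊗ e` in the `(n+1)`-th component. -/
noncomputable def shift : PhiModule R p E →+ PhiModule R p E :=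
  DirectSum.toAddMonoid fun n =>
    (DirectSum.of (fun m : ℕ => FrobBC R p m E) (n + 1)).comp
      (TensorProduct.map (frobStep R p n) (LinearMap.id (R := R) (M := E))).toAddMonoidHom

end PhiModule

/-- An ideal `𝔞` of `R` is `Φ(E)`-special if it is the annihilator of an
`R[x,f]`-submodule of `Φ(E)`, i.e. of an `R`-submodule stable under the shift operator. -/
def IsPhiSpecial (R : Type u) (p : ℕ) [CommRing R] [Fact p.Prime] [CharP R p]
    (E : Type v) [AddCommGroup E] [Module R E] (𝔞 : Ideal R) : Prop :=
  ∃ N : Submodule R (PhiModule R p E),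
    (∀ g ∈ N, PhiModule.shift R p E g ∈ N) ∧ 𝔞 = N.annihilator

/-! ### Further notions -/

/-- The `q`-th bracket (Frobenius) power `I^{[q]}` of an ideal: the ideal generated by
the `q`-th powers of the elements of `I`. -/
def Ideal.bracketPow {S : Type u} [CommRing S] (I : Ideal S) (q : ℕ) : Ideal S :=
  Ideal.span ((fun x => x ^ q) '' (I : Set S))

/-- A Noetherian local ring is regular if its maximal ideal can be generated by
`dim S` elements. -/
def IsRegularLocal (S : Type u) [CommRing S] [IsLocalRing S] : Prop :=
  ∃ s : Finset S, (s.card : WithBot (WithTop ℕ)) = ringKrullDim S ∧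
    Ideal.span (s : Set S) = maximalIdeal S

/-- An ideal `𝔟` of `R` is uniformly `F`-compatible if for every `n ≥ 1` and every
`R`-linear map `φ : R^{(n)} → R` one has `φ(𝔟) ⊆ 𝔟`. -/
def UniformlyFCompatible (R : Type u) (p : ℕ) [CommRing R] [Fact p.Prime] [CharP R p]
    (𝔟 : Ideal R) : Prop :=
  ∀ n : ℕ, 1 ≤ n → ∀ φ : FrobAlg R p n →ₗ[R] R, ∀ b ∈ 𝔟, φ (FrobAlg.of R p n b) ∈ 𝔟

/-- `R` is `F`-finite if `R^{(1)}` is a finitely generated `R`-module. -/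
def IsFFinite (R : Type u) (p : ℕ) [CommRing R] [Fact p.Prime] [CharP R p] : Prop :=
  Module.Finite R (FrobAlg R p 1)

/-- A Noetherian local ring `T` of characteristic `p` is strongly `F`-regular in the
sense of Lyubeznik and Smith if the tight closure of `0` in the injective envelope of
the residue field of `T` is zero. -/
def IsStronglyFRegularLS (T : Type u) (p : ℕ) [CommRing T] [IsLocalRing T]
    [Fact p.Prime] [CharP T p] : Prop :=
  ∀ (ET : Type u) [AddCommGroup ET] [Module T ET],
    Module.Injective T ET →
    ∀ ι : (T ⧸ maximalIdeal T) →ₗ[T] ET, Function.Injective ι →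
    (∀ N : Submodule T ET, N ⊓ LinearMap.range ι = ⊥ → N = ⊥) →
    ∀ m : ET,
      (∃ c : T, (∀ P ∈ minimalPrimes T, c ∉ P) ∧
        ∃ N₀ : ℕ, ∀ n : ℕ, N₀ ≤ n → FrobBC.tmul T p n c m = 0) → m = 0

/-- `Q` is a minimal primary decomposition of the ideal `𝔄`: the `Q i` are primary,
`𝔄` is their intersection, their radicals are pairwise distinct, and none of them
contains the intersection of the others. -/
def IsMinimalPrimaryDecomposition {S : Type u} [CommRing S] (𝔄 : Ideal S) {t : ℕ}
    (Q : Fin t → Ideal S) : Prop :=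
  𝔄 = ⨅ i, Q i ∧ (∀ i, (Q i).IsPrimary) ∧
    (Function.Injective fun i => (Q i).radical) ∧
    ∀ i, ¬ (⨅ j, ⨅ (_ : j ≠ i), Q j) ≤ Q i


/-!
Since special ideals are fully special, a sum of special ideals `𝔞ᵢ` is again special: it is the
annihilator of the intersection of the `R[x,f]`-submodules of `Φ(E)` generated by the `(0 :_E 𝔞ᵢ)`
in degree `0`, because `E` is an injective cogenerator and so `r ∈ 𝔞` as soon as `r` kills
`(0 :_E 𝔞)`. Hence the sum `𝔠` of all proper special ideals is the largest one. It is prime because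
`(ann N : a) = ann (a N)` keeps special ideals special under colons.

For strong `F`-regularity of `R/𝔠`, let `c ∉ 𝔠` and `m ≠ 0` with `c̄ ⊗ m = 0` in all large degrees.
Map `m` to some `e ≠ 0` of `(0 :_E 𝔠)`; full specialness of `𝔠` transports the relation to
`c ⊗ e = 0` in `R^{(n)} ⊗_R E`, so `c` kills the `R[x,f]`-submodule generated by `e` in high degree,
whose annihilator is proper by `F`-purity. Thus `c` lies in a proper special ideal, hence in `𝔠`.
-/

theorem frobenius_pow_apply {R : Type u} {p : ℕ} [CommRing R] [Fact p.Prime] [CharP R p]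
    (n : ℕ) (a : R) : (frobenius R p ^ n) a = a ^ p ^ n := by
  rw [RingHom.coe_pow, iterate_frobenius]

namespace FrobBC

variable {R : Type u} {p : ℕ} [CommRing R] [Fact p.Prime] [CharP R p]
  {M : Type v} [AddCommGroup M] [Module R M]

theorem smul_tmul' (n : ℕ) (r s : R) (m : M) : r • tmul R p n s m = tmul R p n (r * s) m := rfl

theorem add_tmul (n : ℕ) (r s : R) (m : M) :
    tmul R p n (r + s) m = tmul R p n r m + tmul R p n s m :=
  TensorProduct.add_tmul _ _ _

theorem tmul_add (n : ℕ) (r : R) (m m' : M) :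
    tmul R p n r (m + m') = tmul R p n r m + tmul R p n r m' :=
  TensorProduct.tmul_add _ _ _

theorem tmul_zero (n : ℕ) (r : R) : tmul R p n r (0 : M) = 0 :=
  TensorProduct.tmul_zero _ _

theorem tmul_smul (n : ℕ) (r a : R) (m : M) :
    tmul R p n r (a • m) = tmul R p n (a ^ p ^ n * r) m := by
  rw [tmul, ← TensorProduct.smul_tmul, ← frobenius_pow_apply]
  rfl

noncomputable def contractZero : FrobBC R p 0 M →+ M :=
  TensorProduct.liftAddHom (smulAddHom R M) fun a (r : R) m => by
    show ((frobenius R p ^ 0) a * r) • m = r • a • m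
    rw [frobenius_pow_apply, pow_zero, pow_one, mul_comm, mul_smul]

theorem tmul_eq_zero_iff_smul_eq_zero (r : R) (m : M) : tmul R p 0 r m = 0 ↔ r • m = 0 := by
  refine ⟨fun h => congrArg contractZero h |>.trans (map_zero _), fun h => ?_⟩
  rw [← mul_one r, ← pow_one r, ← pow_zero p, ← tmul_smul, h, tmul_zero]

noncomputable def unfoldSucc (n : ℕ) : FrobBC R p (n + 1) M →+ FrobBC R p 1 (FrobBC R p n M) :=
  TensorProduct.liftAddHom
    (AddMonoidHom.mk' (fun r => AddMonoidHom.mk' (fun m => tmul R p 1 r (tmul R p n 1 m))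
        fun m m' => by rw [tmul_add, tmul_add])
      fun r s => by ext m; exact add_tmul 1 r s _ : R →+ M →+ FrobBC R p 1 (FrobBC R p n M))
    fun a (r : R) m => by
      show tmul R p 1 ((frobenius R p ^ (n + 1)) a * r) (tmul R p n 1 m)
        = tmul R p 1 r (tmul R p n 1 (a • m))
      have h : tmul R p n 1 (a • m) = a ^ p ^ n • tmul R p n 1 m := by rw [tmul_smul, smul_tmul']
      rw [h, tmul_smul, ← pow_mul, pow_one, ← pow_succ, frobenius_pow_apply]

theorem unfoldSucc_tmul (n : ℕ) (r : R) (m : M) :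
    unfoldSucc n (tmul R p (n + 1) r m) = tmul R p 1 r (tmul R p n 1 m) := rfl

end FrobBC

theorem IsFPure.eq_zero_of_tmul_one_eq_zero {R : Type u} {p : ℕ} [CommRing R] [Fact p.Prime]
    [CharP R p] (hR : IsFPure R p) {M : Type u} [AddCommGroup M] [Module R M] {n : ℕ} {m : M}
    (h : FrobBC.tmul R p n 1 m = 0) : m = 0 := by
  induction n generalizing M with
  | zero => simpa using (FrobBC.tmul_eq_zero_iff_smul_eq_zero 1 m).1 h
  | succ n ih =>
    have h' := congrArg (FrobBC.unfoldSucc n) h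
    rw [FrobBC.unfoldSucc_tmul, map_zero, ← FrobBC.tmul_zero 1 (1 : R)] at h'
    exact ih (hR _ h')

namespace PhiModule

variable {R : Type u} {p : ℕ} [CommRing R] [Fact p.Prime] [CharP R p]
  {E : Type v} [AddCommGroup E] [Module R E]

theorem of_zero (n : ℕ) : of R p E n 0 = 0 :=
  map_zero (DirectSum.of (fun m => FrobBC R p m E) n)

theorem of_add (n : ℕ) (g h : FrobBC R p n E) : of R p E n (g + h) = of R p E n g + of R p E n h :=
  map_add (DirectSum.of (fun m => FrobBC R p m E) n) g h

theorem of_injective (n : ℕ) : Function.Injective (of R p E n) :=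
  DirectSum.of_injective (β := fun m => FrobBC R p m E) n

theorem of_eq_zero_iff {n : ℕ} {g : FrobBC R p n E} : of R p E n g = 0 ↔ g = 0 := by
  rw [← of_zero n, (of_injective n).eq_iff]

theorem smul_of (r : R) (n : ℕ) (g : FrobBC R p n E) : r • of R p E n g = of R p E n (r • g) :=
  (map_smul (DirectSum.lof R ℕ (fun m => FrobBC R p m E) n) r g).symm

theorem shift_of_tmul (n : ℕ) (s : R) (e : E) :
    shift R p E (of R p E n (FrobBC.tmul R p n s e))
      = of R p E (n + 1) (FrobBC.tmul R p (n + 1) (s ^ p) e) :=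
  DirectSum.toAddMonoid_of _ _ _

theorem induction_on {motive : PhiModule R p E → Prop} (g : PhiModule R p E) (zero : motive 0)
    (tmul : ∀ n s e, motive (of R p E n (FrobBC.tmul R p n s e)))
    (add : ∀ g h, motive g → motive h → motive (g + h)) : motive g :=
  DirectSum.induction_on (β := fun n => FrobBC R p n E) (motive := motive) g zero
    (fun n x => TensorProduct.induction_on (motive := fun x => motive (of R p E n x)) x
      ((congrArg motive (of_zero n)).mpr zero) (fun s e => tmul n s e)
      fun x y hx hy => (congrArg motive (of_add n x y)).mpr (add _ _ hx hy))
    add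

theorem shift_smul (r : R) (g : PhiModule R p E) :
    shift R p E (r • g) = r ^ p • shift R p E g := by
  induction g using induction_on with
  | zero => rw [smul_zero, map_zero, smul_zero]
  | tmul n s e =>
    rw [smul_of, FrobBC.smul_tmul', shift_of_tmul, shift_of_tmul, smul_of, FrobBC.smul_tmul',
      mul_pow]
  | add g h hg hh => rw [smul_add, map_add, map_add, smul_add, hg, hh]

variable (R p) in
/-- The `R[x,f]`-submodule of `Φ(E)` generated by the elements `1 ⊗ e`, `e ∈ X`, of degree `N`. -/
noncomputable def generatedIn (X : Set E) (N : ℕ) : Submodule R (PhiModule R p E) :=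
  Submodule.span R {g | ∃ n, N ≤ n ∧ ∃ s : R, ∃ e ∈ X, g = of R p E n (FrobBC.tmul R p n s e)}

theorem shift_mem_generatedIn {X : Set E} {N : ℕ} {g : PhiModule R p E}
    (hg : g ∈ generatedIn R p X N) : shift R p E g ∈ generatedIn R p X N := by
  induction hg using Submodule.span_induction with
  | mem g hg =>
    obtain ⟨n, hn, s, e, he, rfl⟩ := hg
    rw [shift_of_tmul]
    exact Submodule.subset_span ⟨n + 1, hn.trans n.le_succ, s ^ p, e, he, rfl⟩
  | zero => rw [map_zero]; exact Submodule.zero_mem _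
  | add g h _ _ hg hh => rw [map_add]; exact Submodule.add_mem _ hg hh
  | smul r g _ hg => rw [shift_smul]; exact Submodule.smul_mem _ _ hg

theorem mem_annihilator_generatedIn {X : Set E} {N : ℕ} {c : R} :
    c ∈ (generatedIn R p X N).annihilator ↔ ∀ n, N ≤ n → ∀ e ∈ X, FrobBC.tmul R p n c e = 0 := by
  rw [generatedIn, Submodule.mem_annihilator_span]
  constructor
  · intro h n hn e he
    have := h ⟨_, n, hn, 1, e, he, rfl⟩
    rwa [smul_of, FrobBC.smul_tmul', mul_one, of_eq_zero_iff] at this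
  · rintro h ⟨_, n, hn, s, e, he, rfl⟩
    rw [smul_of, FrobBC.smul_tmul', mul_comm, ← FrobBC.smul_tmul', h n hn e he, smul_zero,
      of_zero]

theorem isPhiSpecial_annihilator_generatedIn (X : Set E) (N : ℕ) :
    IsPhiSpecial R p E (generatedIn R p X N).annihilator :=
  ⟨_, fun _ => shift_mem_generatedIn, rfl⟩

end PhiModule

theorem PhiModule.annihilator_generatedIn_ne_top {R : Type u} {p : ℕ} [CommRing R] [Fact p.Prime]
    [CharP R p] (hR : IsFPure R p) {E : Type u} [AddCommGroup E] [Module R E] {e : E}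
    (he : e ≠ 0) (N : ℕ) : (generatedIn R p {e} N).annihilator ≠ ⊤ := fun h =>
  he <| hR.eq_zero_of_tmul_one_eq_zero <| mem_annihilator_generatedIn.1
    (by rw [h]; exact Submodule.mem_top) N le_rfl e (Set.mem_singleton e)

section LocalRing

variable {R : Type u} [CommRing R] [IsLocalRing R]

theorem Module.Injective.exists_apply_ne_zero {E : Type v} [AddCommGroup E] [Module R E]
    (hE : Module.Injective R E) (ι : (R ⧸ maximalIdeal R) →ₗ[R] E) (hι : Function.Injective ι)
    {M : Type v} [AddCommGroup M] [Module R M] {m : M} (hm : m ≠ 0) :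
    ∃ φ : M →ₗ[R] E, φ m ≠ 0 := by
  have hτ : Ideal.torsionOf R M m ≤ maximalIdeal R :=
    le_maximalIdeal (by rwa [Ne, Ideal.torsionOf_eq_top_iff])
  let g : (R ∙ m) →ₗ[R] E := ι ∘ₗ Submodule.mapQ _ _ LinearMap.id hτ ∘ₗ
    (Ideal.quotTorsionOfEquivSpanSingleton R M m).symm.toLinearMap
  obtain ⟨φ, hφ⟩ := hE.out (R ∙ m).subtype Subtype.val_injective g
  have hm1 : (Ideal.quotTorsionOfEquivSpanSingleton R M m).symm
      ⟨m, Submodule.mem_span_singleton_self m⟩ = Submodule.Quotient.mk 1 := by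
    rw [LinearEquiv.symm_apply_eq, Ideal.quotTorsionOfEquivSpanSingleton_apply_mk, one_smul]
  refine ⟨φ, fun h => one_ne_zero (α := R ⧸ maximalIdeal R) (hι ?_)⟩
  rw [map_zero, ← h, show φ m = g ⟨m, _⟩ from hφ ⟨m, Submodule.mem_span_singleton_self m⟩]
  simp only [g, LinearMap.coe_comp, Function.comp_apply, LinearEquiv.coe_coe, hm1,
    Submodule.mapQ_apply, LinearMap.id_apply]
  rfl

variable {E : Type u} [AddCommGroup E] [Module R E]

theorem mem_of_forall_smul_eq_zero (hE : Module.Injective R E) (ι : (R ⧸ maximalIdeal R) →ₗ[R] E)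
    (hι : Function.Injective ι) {𝔞 : Ideal R} {r : R}
    (h : ∀ e : E, (∀ a ∈ 𝔞, a • e = 0) → r • e = 0) : r ∈ 𝔞 := by
  by_contra hr
  obtain ⟨φ, hφ⟩ := hE.exists_apply_ne_zero ι hι
    (m := Ideal.Quotient.mk 𝔞 r) (by rwa [Ne, Ideal.Quotient.eq_zero_iff_mem])
  refine hφ ?_
  have hmk (a : R) : Ideal.Quotient.mk 𝔞 a = a • 1 := by
    rw [← Algebra.algebraMap_eq_smul_one, Ideal.Quotient.algebraMap_eq]
  rw [hmk, map_smul]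
  refine h _ fun a ha => ?_
  rw [← map_smul, ← hmk, Ideal.Quotient.eq_zero_iff_mem.2 ha, map_zero]

end LocalRing

section Special

variable {R : Type u} [CommRing R] {p : ℕ} [Fact p.Prime] [CharP R p]

theorem IsFullyPhiSpecial.le_annihilator_generatedIn {E : Type v} [AddCommGroup E] [Module R E]
    {𝔞 : Ideal R} (h𝔞 : IsFullyPhiSpecial R p E 𝔞) :
    𝔞 ≤ (PhiModule.generatedIn R p {e : E | ∀ a ∈ 𝔞, a • e = 0} 0).annihilator := by
  refine fun a ha => PhiModule.mem_annihilator_generatedIn.2 fun n _ e he => ?_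
  rcases n with _ | n
  · exact (FrobBC.tmul_eq_zero_iff_smul_eq_zero a e).2 (he a ha)
  · exact h𝔞 (n + 1) n.succ_pos a ha e he

theorem isPhiSpecial_sSup [IsLocalRing R] {E : Type u} [AddCommGroup E] [Module R E]
    (hE : Module.Injective R E) (ι : (R ⧸ maximalIdeal R) →ₗ[R] E) (hι : Function.Injective ι)
    {S : Set (Ideal R)} (hS : ∀ 𝔞 ∈ S, IsFullyPhiSpecial R p E 𝔞) :
    IsPhiSpecial R p E (sSup S) := by
  let N := ⨅ 𝔞 ∈ S, PhiModule.generatedIn R p {e : E | ∀ a ∈ 𝔞, a • e = 0} 0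
  refine ⟨N, fun g hg => ?_, le_antisymm (sSup_le fun 𝔞 h𝔞 => ?_) fun r hr => ?_⟩
  · simp only [N, Submodule.mem_iInf] at hg ⊢
    exact fun 𝔞 h𝔞 => PhiModule.shift_mem_generatedIn (hg 𝔞 h𝔞)
  · exact (hS 𝔞 h𝔞).le_annihilator_generatedIn.trans
      (Submodule.annihilator_mono (biInf_le _ h𝔞))
  · refine mem_of_forall_smul_eq_zero hE ι hι fun e he => ?_
    have hmem : PhiModule.of R p E 0 (FrobBC.tmul R p 0 1 e) ∈ N := by
      simp only [N, Submodule.mem_iInf]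
      exact fun 𝔞 h𝔞 => Submodule.subset_span
        ⟨0, le_rfl, 1, e, fun a ha => he a (le_sSup h𝔞 ha), rfl⟩
    have := Submodule.mem_annihilator.1 hr _ hmem
    rwa [PhiModule.smul_of, FrobBC.smul_tmul', mul_one, PhiModule.of_eq_zero_iff,
      FrobBC.tmul_eq_zero_iff_smul_eq_zero] at this

theorem IsPhiSpecial.colon_singleton {E : Type v} [AddCommGroup E] [Module R E] {𝔞 : Ideal R}
    (h𝔞 : IsPhiSpecial R p E 𝔞) (a : R) : IsPhiSpecial R p E (𝔞.colon {a}) := by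
  obtain ⟨N, hN, rfl⟩ := h𝔞
  refine ⟨N.map (DistribSMul.toLinearMap R _ a), ?_, ?_⟩
  · rintro _ ⟨g, hg, rfl⟩
    refine ⟨a ^ (p - 1) • PhiModule.shift R p E g, N.smul_mem _ (hN g hg), ?_⟩
    rw [DistribSMul.toLinearMap_apply, DistribSMul.toLinearMap_apply,
      PhiModule.shift_smul, smul_smul, ← pow_succ', Nat.sub_add_cancel (Fact.out : p.Prime).pos]
  · ext r
    simp only [Submodule.mem_colon_singleton, Submodule.mem_annihilator, Submodule.mem_map,
      DistribSMul.toLinearMap_apply, forall_exists_index, and_imp, forall_apply_eq_imp_iff₂,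
      smul_smul, smul_eq_mul]

end Special

theorem Ideal.isPrime_of_isGreatest_of_colon_mem {R : Type u} [CommRing R] {S : Set (Ideal R)}
    (hS : ∀ 𝔞 ∈ S, ∀ a, 𝔞.colon {a} ∈ S) {𝔠 : Ideal R} (h𝔠 : IsGreatest {𝔟 ∈ S | 𝔟 ≠ ⊤} 𝔠) :
    𝔠.IsPrime := by
  refine ⟨h𝔠.1.2, fun {a b} hab => or_iff_not_imp_left.2 fun ha => ?_⟩
  have hne : 𝔠.colon {a} ≠ ⊤ := fun h => ha <| by
    simpa using Submodule.mem_colon_singleton.1 (h ▸ Submodule.mem_top : (1 : R) ∈ 𝔠.colon {a})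
  exact h𝔠.2 ⟨hS _ h𝔠.1.1 a, hne⟩ (Submodule.mem_colon_singleton.2 (by rwa [smul_eq_mul, mul_comm]))

section Quotient

variable {R : Type u} [CommRing R] {p : ℕ} [Fact p.Prime] [CharP R p]
  {E : Type v} [AddCommGroup E] [Module R E] {𝔠 : Ideal R}

theorem IsFullyPhiSpecial.tmul_eq_of_sub_mem (h𝔠 : IsFullyPhiSpecial R p E 𝔠) {n : ℕ}
    (hn : 1 ≤ n) {e : E} (he : ∀ a ∈ 𝔠, a • e = 0) {r s : R} (hrs : r - s ∈ 𝔠) :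
    FrobBC.tmul R p n r e = FrobBC.tmul R p n s e := by
  rw [← sub_add_cancel r s, FrobBC.add_tmul, h𝔠 n hn _ hrs e he, zero_add]

variable {M : Type*} [AddCommGroup M] [Module (R ⧸ 𝔠) M] [Module R M] [IsScalarTower R (R ⧸ 𝔠) M]

theorem LinearMap.smul_apply_eq_zero_of_quotient (H : M →ₗ[R] E) (y : M) :
    ∀ a ∈ 𝔠, a • H y = 0 := fun a ha => by
  rw [← map_smul, ← algebraMap_smul (R ⧸ 𝔠) a y, Ideal.Quotient.algebraMap_eq,
    Ideal.Quotient.eq_zero_iff_mem.2 ha, zero_smul, map_zero]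

theorem IsFullyPhiSpecial.tmul_surjInv (h𝔠 : IsFullyPhiSpecial R p E 𝔠) {n : ℕ} (hn : 1 ≤ n)
    (H : M →ₗ[R] E) (r : R) (y : M) :
    FrobBC.tmul R p n (Function.surjInv Ideal.Quotient.mk_surjective (Ideal.Quotient.mk 𝔠 r)) (H y)
      = FrobBC.tmul R p n r (H y) :=
  h𝔠.tmul_eq_of_sub_mem hn (H.smul_apply_eq_zero_of_quotient y)
    (Ideal.Quotient.eq.1 (Function.surjInv_eq _ _))

variable [CharP (R ⧸ 𝔠) p]

/-- `r̄ ⊗ y ↦ r ⊗ H y`, well defined because `𝔠` is fully `Φ(E)`-special and `H` lands in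
`(0 :_E 𝔠)`. -/
noncomputable def IsFullyPhiSpecial.quotientDesc (h𝔠 : IsFullyPhiSpecial R p E 𝔠) {n : ℕ}
    (hn : 1 ≤ n) (H : M →ₗ[R] E) : FrobBC (R ⧸ 𝔠) p n M →+ FrobBC R p n E :=
  TensorProduct.liftAddHom
    (AddMonoidHom.mk' (fun t => AddMonoidHom.mk'
        (fun y => FrobBC.tmul R p n (Function.surjInv Ideal.Quotient.mk_surjective t) (H y))
        fun y y' => by rw [map_add, FrobBC.tmul_add])
      (fun t t' => by
        ext y
        obtain ⟨r, rfl⟩ := Ideal.Quotient.mk_surjective t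
        obtain ⟨r', rfl⟩ := Ideal.Quotient.mk_surjective t'
        show FrobBC.tmul R p n (Function.surjInv _ (_ + _)) (H y)
          = FrobBC.tmul R p n (Function.surjInv _ _) (H y)
            + FrobBC.tmul R p n (Function.surjInv _ _) (H y)
        rw [← map_add, h𝔠.tmul_surjInv hn, h𝔠.tmul_surjInv hn, h𝔠.tmul_surjInv hn,
          FrobBC.add_tmul]) : R ⧸ 𝔠 →+ M →+ FrobBC R p n E)
    fun s (t : R ⧸ 𝔠) y => by
      obtain ⟨a, rfl⟩ := Ideal.Quotient.mk_surjective s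
      obtain ⟨r, rfl⟩ := Ideal.Quotient.mk_surjective t
      show FrobBC.tmul R p n (Function.surjInv _ ((frobenius (R ⧸ 𝔠) p ^ n) _ * _)) (H y)
        = FrobBC.tmul R p n (Function.surjInv _ _) (H (Ideal.Quotient.mk 𝔠 a • y))
      rw [frobenius_pow_apply, ← map_pow, ← map_mul, h𝔠.tmul_surjInv hn, h𝔠.tmul_surjInv hn,
        ← Ideal.Quotient.algebraMap_eq, algebraMap_smul, map_smul, FrobBC.tmul_smul]

theorem IsFullyPhiSpecial.tmul_apply_eq_zero (h𝔠 : IsFullyPhiSpecial R p E 𝔠) {n : ℕ}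
    (hn : 1 ≤ n) (H : M →ₗ[R] E) {c : R} {y : M}
    (h : FrobBC.tmul (R ⧸ 𝔠) p n (Ideal.Quotient.mk 𝔠 c) y = 0) :
    FrobBC.tmul R p n c (H y) = 0 := by
  rw [← h𝔠.tmul_surjInv hn]
  exact (congrArg (h𝔠.quotientDesc hn H) h).trans (map_zero _)

end Quotient

theorem isStronglyFRegularLS_quotient {R : Type u} [CommRing R] [IsLocalRing R] {p : ℕ}
    [Fact p.Prime] [CharP R p] {E : Type u} [AddCommGroup E] [Module R E]
    (hE : Module.Injective R E) (ι : (R ⧸ maximalIdeal R) →ₗ[R] E) (hι : Function.Injective ι)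
    (hR : IsFPure R p) {𝔠 : Ideal R} (h𝔠 : IsFullyPhiSpecial R p E 𝔠)
    (hmax : ∀ 𝔟 : Ideal R, 𝔟 ≠ ⊤ → IsPhiSpecial R p E 𝔟 → 𝔟 ≤ 𝔠)
    [IsLocalRing (R ⧸ 𝔠)] [CharP (R ⧸ 𝔠) p] : IsStronglyFRegularLS (R ⧸ 𝔠) p := by
  intro ET _ _ _ _ _ _ m ⟨c, hc, N₀, hcm⟩
  by_contra hm
  obtain ⟨c, rfl⟩ := Ideal.Quotient.mk_surjective c
  let _ := Module.compHom ET (Ideal.Quotient.mk 𝔠)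
  have : IsScalarTower R (R ⧸ 𝔠) ET := ⟨fun a => mul_smul (Ideal.Quotient.mk 𝔠 a)⟩
  obtain ⟨H, hH⟩ := hE.exists_apply_ne_zero ι hι hm
  have hc𝔠 : c ∈ 𝔠 := by
    refine hmax _ (PhiModule.annihilator_generatedIn_ne_top hR hH (max N₀ 1))
      (PhiModule.isPhiSpecial_annihilator_generatedIn _ _)
      (PhiModule.mem_annihilator_generatedIn.2 fun n hn e he => ?_)
    rw [Set.mem_singleton_iff.1 he]
    exact h𝔠.tmul_apply_eq_zero (le_of_max_le_right hn) H (hcm n (le_of_max_le_left hn))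
  obtain ⟨P, hP, -⟩ := Ideal.exists_minimalPrimes_le (bot_le : ⊥ ≤ maximalIdeal (R ⧸ 𝔠))
  exact hc P hP (by rw [Ideal.Quotient.eq_zero_iff_mem.2 hc𝔠]; exact P.zero_mem)

theorem largest_special_proper_ideal_prime_and_quotient_strongly_F_regular_general (R : Type u) [CommRing R] [IsLocalRing R]
    (p : ℕ) [Fact p.Prime] [CharP R p]
    (E : Type u) [AddCommGroup E] [Module R E]
    (hE : Module.Injective R E)
    (ι : (R ⧸ maximalIdeal R) →ₗ[R] E) (hι : Function.Injective ι)
    (hFpure : IsFPure R p)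
    (hfull : ∀ 𝔞 : Ideal R, IsPhiSpecial R p E 𝔞 → IsFullyPhiSpecial R p E 𝔞) :
    ∃ 𝔠 : Ideal R, 𝔠 ≠ ⊤ ∧ IsPhiSpecial R p E 𝔠 ∧
      (∀ 𝔟 : Ideal R, 𝔟 ≠ ⊤ → IsPhiSpecial R p E 𝔟 → 𝔟 ≤ 𝔠) ∧ 𝔠.IsPrime ∧
      (∀ [inst1 : IsLocalRing (R ⧸ 𝔠)] [inst2 : CharP (R ⧸ 𝔠) p],
        IsStronglyFRegularLS (R ⧸ 𝔠) p) := by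
  set S := {𝔟 : Ideal R | IsPhiSpecial R p E 𝔟 ∧ 𝔟 ≠ ⊤}
  have hspecial : IsPhiSpecial R p E (sSup S) :=
    isPhiSpecial_sSup hE ι hι fun 𝔟 h𝔟 => hfull 𝔟 h𝔟.1
  have hne : sSup S ≠ ⊤ := ne_top_of_le_ne_top (maximalIdeal.isMaximal R).ne_top
    (sSup_le fun 𝔟 h𝔟 => le_maximalIdeal h𝔟.2)
  have hgreatest : IsGreatest S (sSup S) := ⟨⟨hspecial, hne⟩, fun _ h𝔟 => le_sSup h𝔟⟩
  have hle : ∀ 𝔟 : Ideal R, 𝔟 ≠ ⊤ → IsPhiSpecial R p E 𝔟 → 𝔟 ≤ sSup S :=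
    fun 𝔟 hne hsp => le_sSup ⟨hsp, hne⟩
  exact ⟨sSup S, hne, hspecial, hle,
    Ideal.isPrime_of_isGreatest_of_colon_mem (S := {𝔟 | IsPhiSpecial R p E 𝔟})
      (fun _ h𝔞 a => IsPhiSpecial.colon_singleton h𝔞 a) hgreatest,
    isStronglyFRegularLS_quotient hE ι hι hFpure (hfull _ hspecial) hle⟩

theorem largest_special_proper_ideal_prime_and_quotient_strongly_F_regular (R : Type u) [CommRing R] [IsNoetherianRing R] [IsLocalRing R]
    (p : ℕ) [Fact p.Prime] [CharP R p]
    (E : Type u) [AddCommGroup E] [Module R E]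
    (hE : Module.Injective R E)
    (ι : (R ⧸ maximalIdeal R) →ₗ[R] E) (hι : Function.Injective ι)
    (hess : ∀ N : Submodule R E, N ⊓ LinearMap.range ι = ⊥ → N = ⊥)
    (hFpure : IsFPure R p)
    (hfull : ∀ 𝔞 : Ideal R, IsPhiSpecial R p E 𝔞 → IsFullyPhiSpecial R p E 𝔞) :
    ∃ 𝔠 : Ideal R, 𝔠 ≠ ⊤ ∧ IsPhiSpecial R p E 𝔠 ∧
      (∀ 𝔟 : Ideal R, 𝔟 ≠ ⊤ → IsPhiSpecial R p E 𝔟 → 𝔟 ≤ 𝔠) ∧ 𝔠.IsPrime ∧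
      (∀ [inst1 : IsLocalRing (R ⧸ 𝔠)] [inst2 : CharP (R ⧸ 𝔠) p],
        IsStronglyFRegularLS (R ⧸ 𝔠) p) :=
  largest_special_proper_ideal_prime_and_quotient_strongly_F_regular_general R p E hE ι hι hFpure
    hfull
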